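/- arXiv:1512.00256 — 3 statements merged into one kernel-verified Lean document; each statement's English description precedes it below -/
import Mathlib

section
/- Let n ≥ 2 and let T be a real symmetric n×n matrix with tr T = 0. Then equality |tr(T³)| = ((n−2)/√(n(n−1))) · ‖T‖³ holds if and only if there exists λ ∈ ℝ such that T is orthogonally diagonalizable with n−1 eigenvalues equal to λ and one eigenvalue equal to −(n−1)λ. -/
/-!
Diagonalize `T` orthogonally; its eigenvalues `x` sum to zero. Put `S = ∑ xᵢ²` and
`l = √(S / (n (n - 1)))`. Cauchy–Schwarz applied to the other entries gives `|xᵢ| ≤ (n - 1) l`,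
so each `(xᵢ - l)² (xᵢ + (n - 1) l)` is nonnegative, and these terms add up to
`∑ xᵢ³ + (n - 2) l S`. This is Huisken's inequality, and equality forces every eigenvalue to be
`l` or `-(n - 1) l`; since the eigenvalues sum to zero, exactly one of them is `-(n - 1) l`.
-/

open Matrix Finset Function

section Vector

variable {ι : Type*} [Fintype ι] {x : ι → ℝ} {l : ℝ}

lemma card_mul_sq_le_of_sum_eq_zero (hsum : ∑ i, x i = 0) (j : ι) :
    Fintype.card ι * x j ^ 2 ≤ (Fintype.card ι - 1) * ∑ i, x i ^ 2 := by
  classical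
  have hj : x j = -∑ i ∈ univ.erase j, x i := by
    rw [sum_erase_eq_sub (mem_univ j), hsum]; ring
  have hcard : ((univ.erase j).card : ℝ) = Fintype.card ι - 1 := by
    rw [card_erase_of_mem (mem_univ j), card_univ, Nat.cast_pred (Fintype.card_pos_iff.2 ⟨j⟩)]
  have hcs := sq_sum_le_card_mul_sum_sq (s := univ.erase j) (f := x)
  rw [← neg_sq, ← hj, hcard, sum_erase_eq_sub (mem_univ j)] at hcs
  linarith

lemma abs_le_of_sum_eq_zero (hsum : ∑ i, x i = 0)
    (hl : Fintype.card ι * (Fintype.card ι - 1) * l ^ 2 = ∑ i, x i ^ 2) (hl0 : 0 ≤ l) (j : ι) :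
    |x j| ≤ (Fintype.card ι - 1) * l := by
  have hN : (1 : ℝ) ≤ Fintype.card ι := by exact_mod_cast Fintype.card_pos_iff.2 ⟨j⟩
  have hsq := card_mul_sq_le_of_sum_eq_zero hsum j
  rw [← hl] at hsq
  refine abs_le_of_sq_le_sq (le_of_mul_le_mul_left (a := (Fintype.card ι : ℝ)) ?_ (by linarith))
    (mul_nonneg (by linarith) hl0)
  linarith

lemma sum_sq_sub_mul_add_eq (hsum : ∑ i, x i = 0)
    (hl : Fintype.card ι * (Fintype.card ι - 1) * l ^ 2 = ∑ i, x i ^ 2) :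
    ∑ i, (x i - l) ^ 2 * (x i + (Fintype.card ι - 1) * l) =
      ∑ i, x i ^ 3 + (Fintype.card ι - 2) * l * ∑ i, x i ^ 2 := by
  have hexpand : ∀ i, (x i - l) ^ 2 * (x i + (Fintype.card ι - 1) * l) =
      x i ^ 3 + (Fintype.card ι - 3) * l * x i ^ 2 + (3 - 2 * Fintype.card ι) * l ^ 2 * x i
        + (Fintype.card ι - 1) * l ^ 3 := fun i => by ring
  simp only [hexpand, sum_add_distrib, ← mul_sum, hsum, sum_const, card_univ, nsmul_eq_mul]
  linear_combination l * hl

lemma eq_or_eq_of_sum_pow_three_eq (hsum : ∑ i, x i = 0)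
    (hl : Fintype.card ι * (Fintype.card ι - 1) * l ^ 2 = ∑ i, x i ^ 2) (hl0 : 0 ≤ l)
    (hcube : ∑ i, x i ^ 3 = -((Fintype.card ι - 2) * l * ∑ i, x i ^ 2)) (i : ι) :
    x i = l ∨ x i = -(Fintype.card ι - 1) * l := by
  have hterm : ∀ j ∈ univ, 0 ≤ (x j - l) ^ 2 * (x j + (Fintype.card ι - 1) * l) := fun j _ =>
    mul_nonneg (sq_nonneg _) (by linarith [neg_abs_le (x j), abs_le_of_sum_eq_zero hsum hl hl0 j])
  have hzero := (sum_eq_zero_iff_of_nonneg hterm).1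
    (by rw [sum_sq_sub_mul_add_eq hsum hl, hcube]; ring) i (mem_univ i)
  rcases mul_eq_zero.1 hzero with h | h
  · exact .inl (sub_eq_zero.1 (pow_eq_zero_iff two_ne_zero |>.1 h))
  · exact .inr (by linarith)

lemma exists_eq_update_of_forall_eq_or_eq [DecidableEq ι] [Nonempty ι] (hsum : ∑ i, x i = 0)
    (h : ∀ i, x i = l ∨ x i = -(Fintype.card ι - 1) * l) :
    ∃ i₀, x = update (fun _ => l) i₀ (-(Fintype.card ι - 1) * l) := by
  obtain ⟨j⟩ := ‹Nonempty ι›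
  rcases eq_or_ne l 0 with rfl | hl
  · refine ⟨j, funext fun i => ?_⟩
    rcases h i with h | h <;> simp [h, update_apply]
  set N : ℝ := (Fintype.card ι : ℝ)
  have hN : 0 < N := Nat.cast_pos.2 (Fintype.card_pos_iff.2 ⟨j⟩)
  set A := univ.filter fun i => x i ≠ l
  -- each deviation `x i - l` is `0` or `-N l`, and the deviations sum to `-N l`
  have hdev : ∀ i, x i - l = -(N * l) * if x i ≠ l then 1 else 0 := by
    intro i
    split_ifs with hi
    · linarith [(h i).resolve_left hi]
    · simp [not_not.1 hi]
  have hA : (A.card : ℝ) * (N * l) = N * l := by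
    have hsum' : ∑ i, (x i - l) = -(N * l) := by
      rw [sum_sub_distrib, hsum, sum_const, card_univ, nsmul_eq_mul]; ring
    simp only [hdev, ← mul_sum, sum_boole] at hsum'
    linarith
  obtain ⟨i₀, hi₀⟩ := card_eq_one.1 (by
    exact_mod_cast mul_right_cancel₀ (mul_ne_zero hN.ne' hl) (hA.trans (one_mul _).symm))
  have hmem : ∀ i, x i ≠ l ↔ i = i₀ := fun i => by
    simpa [A] using congrArg (i ∈ ·) hi₀
  refine ⟨i₀, funext fun i => ?_⟩
  rcases eq_or_ne i i₀ with rfl | hi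
  · rw [update_self]; exact (h i).resolve_left ((hmem i).2 rfl)
  · rw [update_of_ne hi]; exact not_not.1 (mt (hmem i).1 hi)

lemma sum_update_const_pow [DecidableEq ι] (a b : ℝ) (i₀ : ι) (k : ℕ) :
    ∑ i, update (fun _ => a) i₀ b i ^ k = b ^ k + (Fintype.card ι - 1) * a ^ k := by
  have hpow : (fun i => update (fun _ => a) i₀ b i ^ k) = update (fun _ => a ^ k) i₀ (b ^ k) :=
    funext fun i => by rcases eq_or_ne i i₀ with rfl | hi <;> simp [*]
  rw [hpow, sum_update_of_mem (mem_univ i₀), sum_const, ← compl_eq_univ_sdiff, card_compl,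
    card_singleton, nsmul_eq_mul, Nat.cast_pred (Fintype.card_pos_iff.2 ⟨i₀⟩)]

theorem abs_sum_pow_three_eq_iff_of_mul_sq_eq [DecidableEq ι] (hN : 2 ≤ Fintype.card ι)
    (hsum : ∑ i, x i = 0)
    (hl : Fintype.card ι * (Fintype.card ι - 1) * l ^ 2 = ∑ i, x i ^ 2) (hl0 : 0 ≤ l) :
    |∑ i, x i ^ 3| = (Fintype.card ι - 2) * l * ∑ i, x i ^ 2 ↔
      ∃ (lam : ℝ) (i₀ : ι), x = update (fun _ => lam) i₀ (-(Fintype.card ι - 1) * lam) := by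
  have hN2 : (2 : ℝ) ≤ Fintype.card ι := by exact_mod_cast hN
  have : Nonempty ι := Fintype.card_pos_iff.1 (by omega)
  constructor
  · intro h
    rcases (abs_eq (by positivity)).1 h with hpos | hneg
    · have hsum' : ∑ i, -x i = 0 := by rw [sum_neg_distrib, hsum, neg_zero]
      have hsq' : ∑ i, (-x i) ^ 2 = ∑ i, x i ^ 2 := by simp only [neg_sq]
      have hcube' : ∑ i, (-x i) ^ 3 = -∑ i, x i ^ 3 := by
        simp only [Odd.neg_pow (by decide : Odd 3), sum_neg_distrib]
      rw [← hsq'] at hl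
      obtain ⟨i₀, hx⟩ := exists_eq_update_of_forall_eq_or_eq hsum'
        (eq_or_eq_of_sum_pow_three_eq hsum' hl hl0 (by rw [hcube', hpos, hsq']))
      refine ⟨-l, i₀, funext fun i => ?_⟩
      have hxi := congrFun hx i
      rcases eq_or_ne i i₀ with rfl | hi
      · simp only [update_self] at hxi ⊢; linarith
      · simp only [update_of_ne hi] at hxi ⊢; linarith
    · exact ⟨l, exists_eq_update_of_forall_eq_or_eq hsum
        (eq_or_eq_of_sum_pow_three_eq hsum hl hl0 hneg)⟩
  · rintro ⟨lam, i₀, rfl⟩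
    simp only [sum_update_const_pow] at hl ⊢
    have hpos : (0 : ℝ) < Fintype.card ι * (Fintype.card ι - 1) := by nlinarith
    have hl_abs : l = |lam| := by
      have hsq : l ^ 2 = lam ^ 2 := mul_left_cancel₀ hpos.ne' (by linear_combination hl)
      rw [← abs_of_nonneg hl0, ← sq_eq_sq_iff_abs_eq_abs]; exact hsq
    have hcube : |lam| ^ 3 = |lam| * lam ^ 2 := by rw [pow_succ', sq_abs]
    rw [hl_abs, show (-(Fintype.card ι - 1) * lam) ^ 3 + (Fintype.card ι - 1) * lam ^ 3 =
        (Fintype.card ι * (Fintype.card ι - 1) * (Fintype.card ι - 2) : ℝ) * -lam ^ 3 by ring,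
      abs_mul, abs_of_nonneg (mul_nonneg hpos.le (by linarith)), abs_neg, abs_pow]
    linear_combination (Fintype.card ι * (Fintype.card ι - 1) * (Fintype.card ι - 2) : ℝ) * hcube

theorem abs_sum_pow_three_eq_iff [DecidableEq ι] (hN : 2 ≤ Fintype.card ι)
    (hsum : ∑ i, x i = 0) :
    |∑ i, x i ^ 3| = (Fintype.card ι - 2) / √(Fintype.card ι * (Fintype.card ι - 1)) *
        √(∑ i, x i ^ 2) ^ 3 ↔
      ∃ (lam : ℝ) (i₀ : ι), x = update (fun _ => lam) i₀ (-(Fintype.card ι - 1) * lam) := by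
  have hN2 : (2 : ℝ) ≤ Fintype.card ι := by exact_mod_cast hN
  have hpos : (0 : ℝ) < Fintype.card ι * (Fintype.card ι - 1) := by nlinarith
  have hS : 0 ≤ ∑ i, x i ^ 2 := sum_nonneg fun i _ => sq_nonneg _
  have hl : Fintype.card ι * (Fintype.card ι - 1) *
      (√(∑ i, x i ^ 2) / √(Fintype.card ι * (Fintype.card ι - 1))) ^ 2 = ∑ i, x i ^ 2 := by
    rw [div_pow, Real.sq_sqrt hS, Real.sq_sqrt hpos.le, mul_div_cancel₀ _ hpos.ne']
  rw [← abs_sum_pow_three_eq_iff_of_mul_sq_eq hN hsum hl (by positivity), pow_succ,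
    Real.sq_sqrt hS]
  ring_nf

end Vector

namespace Matrix

lemma sum_sum_sq_eq_trace_mul_transpose {m n R : Type*} [Fintype m] [Fintype n] [Semiring R]
    (A : Matrix m n R) :
    ∑ i, ∑ j, A i j ^ 2 = (A * Aᵀ).trace := by
  simp [trace, mul_apply, sq]

variable {ι R : Type*} [Fintype ι] [DecidableEq ι] [CommSemiring R] {P : Matrix ι ι R}

lemma trace_transpose_mul_mul (hP : P * Pᵀ = 1) (A : Matrix ι ι R) :
    (Pᵀ * A * P).trace = A.trace := by
  rw [trace_mul_cycle, hP, one_mul]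

lemma transpose_mul_mul_pow (hP : P * Pᵀ = 1) (A : Matrix ι ι R) (k : ℕ) :
    (Pᵀ * A * P) ^ k = Pᵀ * A ^ k * P := by
  induction k with
  | zero => rw [pow_zero, pow_zero, Matrix.mul_one, mul_eq_one_comm.1 hP]
  | succ k ih =>
    rw [pow_succ, ih, pow_succ]
    simp only [Matrix.mul_assoc]
    rw [← Matrix.mul_assoc P, hP, Matrix.one_mul]

lemma trace_pow_transpose_mul_diagonal_mul (hP : P * Pᵀ = 1) (d : ι → R) (k : ℕ) :
    ((Pᵀ * diagonal d * P) ^ k).trace = ∑ i, d i ^ k := by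
  rw [transpose_mul_mul_pow hP, trace_transpose_mul_mul hP, diagonal_pow, trace_diagonal]
  rfl

lemma IsSymm.exists_orthogonal_diagonal {T : Matrix ι ι ℝ} (hT : T.IsSymm) :
    ∃ (P : Matrix ι ι ℝ) (d : ι → ℝ), P * Pᵀ = 1 ∧ T = Pᵀ * diagonal d * P := by
  have hH : T.IsHermitian := hT
  refine ⟨(hH.eigenvectorUnitary : Matrix ι ι ℝ)ᵀ, hH.eigenvalues, ?_, ?_⟩
  · simpa [star_eq_conjTranspose] using Unitary.coe_star_mul_self hH.eigenvectorUnitary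
  · simpa [Unitary.conjStarAlgAut_apply, star_eq_conjTranspose] using hH.spectral_theorem

end Matrix

/-- Equality case of Huisken's inequality: `|tr(T³)| = ((n−2)/√(n(n−1))) ‖T‖³`
holds iff `T` is orthogonally diagonalizable with `n−1` eigenvalues `λ`
and one eigenvalue `−(n−1)λ`. -/
theorem stmt_1 (n : ℕ) (hn : 2 ≤ n) (T : Matrix (Fin n) (Fin n) ℝ)
    (hsymm : T.IsSymm) (htr : T.trace = 0) :
    |(T ^ 3).trace| =
      ((n : ℝ) - 2) / Real.sqrt ((n : ℝ) * ((n : ℝ) - 1)) *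
        (Real.sqrt (∑ i, ∑ j, (T i j) ^ 2)) ^ 3 ↔
    ∃ (lam : ℝ) (P : Matrix (Fin n) (Fin n) ℝ) (i₀ : Fin n),
      P * P.transpose = 1 ∧
      T = P.transpose * Matrix.diagonal
        (Function.update (fun _ : Fin n => lam) i₀ (-((n : ℝ) - 1) * lam)) * P := by
  have reduce : ∀ P d, P * Pᵀ = 1 → T = Pᵀ * diagonal d * P →
      (|(T ^ 3).trace| = ((n : ℝ) - 2) / √((n : ℝ) * ((n : ℝ) - 1)) *
        √(∑ i, ∑ j, (T i j) ^ 2) ^ 3 ↔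
      ∃ (lam : ℝ) (i₀ : Fin n), d = update (fun _ => lam) i₀ (-((n : ℝ) - 1) * lam)) := by
    rintro P d hP rfl
    have hsum : ∑ i, d i = 0 := by rwa [trace_transpose_mul_mul hP, trace_diagonal] at htr
    rw [sum_sum_sq_eq_trace_mul_transpose, hsymm.eq, ← sq,
      trace_pow_transpose_mul_diagonal_mul hP, trace_pow_transpose_mul_diagonal_mul hP]
    simpa only [Fintype.card_fin] using
      abs_sum_pow_three_eq_iff (by rwa [Fintype.card_fin]) hsum
  constructor
  · intro h
    obtain ⟨P, d, hP, hT⟩ := hsymm.exists_orthogonal_diagonal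
    obtain ⟨lam, i₀, rfl⟩ := (reduce P d hP hT).1 h
    exact ⟨lam, P, i₀, hP, hT⟩
  · rintro ⟨lam, P, i₀, hP, hT⟩
    exact (reduce P _ hP hT).2 ⟨lam, i₀, rfl⟩
end

section
/- Let n ≥ 3, let W be a 4-tensor on ℝⁿ with curvature symmetries, satisfying the first Bianchi identity, and totally trace-free, and let B be a real symmetric trace-free n×n matrix. Then |−Σ_{i,j,k,l} W_{ijkl} B_{ik} B_{jl} + (n/(n−2)) tr(B³)| ≤ √((n−2)/(2(n−1))) · (‖W‖² + (2n/(n−2))‖B‖²)^{1/2} · ‖B‖². -/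
/-!
Let `R = B ⊙ B` be the Kulkarni–Nomizu square of `B`, `D` its Weyl part and `r` the trace-free part
of `B²`. A tensor `X` with the antisymmetries of `W` satisfies `⟨X, δ ⊙ g⟩ = 4 ⟨Ric X, g⟩`, so
`⟨W, D⟩ = ⟨W, R⟩ = 4 Σ W_{ijkl} B_{ik} B_{jl}`, while `tr B = 0` gives `tr B³ = ⟨B, r⟩`. With
`β = 2n/(n-2)` the quantity to bound is the inner product of `(W, √β B)` and `(-D/4, √β r/2)`, and
Cauchy–Schwarz bounds it by `(‖W‖² + β‖B‖²)^{1/2} (‖D‖²/16 + β‖r‖²/4)^{1/2}`. Since `Ric D = 0`,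
`‖D‖² = ⟨D, R⟩`, which the contractions `Ric R = -2B²` and `‖R‖² = 8(‖B‖⁴ - ‖B²‖²)` evaluate to
`‖D‖² + 4β‖r‖² = 8 (n-2)/(n-1) ‖B‖⁴`; this turns the second factor into `√((n-2)/(2(n-1))) ‖B‖²`.
-/

open Finset Matrix

lemma sub_two_pos_of_two_lt {n : ℕ} (hn : 2 < n) : (0 : ℝ) < n - 2 := by
  rw [sub_pos]; exact_mod_cast hn

lemma abs_add_mul_le_sqrt {a b w d s ρ β : ℝ} (hw : 0 ≤ w) (hd : 0 ≤ d) (hs : 0 ≤ s)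
    (hρ : 0 ≤ ρ) (hβ : 0 ≤ β) (ha : a ^ 2 ≤ w * d) (hb : b ^ 2 ≤ s * ρ) :
    |a + β * b| ≤ √((w + β * s) * (d + β * ρ)) := by
  -- `(a b)² ≤ (w ρ) (s d)`, and AM–GM.
  have hab : 2 * (a * b) ≤ w * ρ + s * d := by
    nlinarith [sq_nonneg (w * ρ - s * d), mul_le_mul ha hb (sq_nonneg b) (mul_nonneg hw hd),
      mul_nonneg hw hρ, mul_nonneg hs hd]
  apply Real.abs_le_sqrt
  nlinarith [mul_le_mul_of_nonneg_left hab hβ, mul_le_mul_of_nonneg_left hb (mul_nonneg hβ hβ)]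

section Frobenius

variable {ι : Type*} [Fintype ι]

def frobeniusDot (A C : Matrix ι ι ℝ) : ℝ := (A * Cᵀ).trace

lemma frobeniusDot_eq_sum (A C : Matrix ι ι ℝ) :
    frobeniusDot A C = ∑ i, ∑ j, A i j * C i j := by
  simp [frobeniusDot, trace, mul_apply]

lemma frobeniusDot_comm (A C : Matrix ι ι ℝ) : frobeniusDot A C = frobeniusDot C A := by
  simp only [frobeniusDot_eq_sum, mul_comm]

lemma frobeniusDot_zero_left (C : Matrix ι ι ℝ) : frobeniusDot 0 C = 0 := by
  simp [frobeniusDot]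

lemma frobeniusDot_smul_left (c : ℝ) (A C : Matrix ι ι ℝ) :
    frobeniusDot (c • A) C = c * frobeniusDot A C := by
  simp only [frobeniusDot, smul_mul, trace_smul, smul_eq_mul]

lemma frobeniusDot_smul_right (c : ℝ) (A C : Matrix ι ι ℝ) :
    frobeniusDot A (c • C) = c * frobeniusDot A C := by
  rw [frobeniusDot_comm, frobeniusDot_smul_left, frobeniusDot_comm]

lemma trace_mul_eq_frobeniusDot (A C : Matrix ι ι ℝ) : (A * C).trace = frobeniusDot A Cᵀ := by
  rw [frobeniusDot, transpose_transpose]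

lemma frobeniusDot_self_nonneg (A : Matrix ι ι ℝ) : 0 ≤ frobeniusDot A A := by
  simp only [frobeniusDot_eq_sum, ← sq]; positivity

lemma sq_frobeniusDot_le (A C : Matrix ι ι ℝ) :
    frobeniusDot A C ^ 2 ≤ frobeniusDot A A * frobeniusDot C C := by
  simpa only [frobeniusDot_eq_sum, ← sq, Fintype.sum_prod_type] using
    sum_mul_sq_le_sq_mul_sq univ (fun p : ι × ι => A p.1 p.2) (fun p => C p.1 p.2)

variable [DecidableEq ι]

lemma frobeniusDot_one_right (A : Matrix ι ι ℝ) : frobeniusDot A 1 = A.trace := by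
  simp [frobeniusDot]

noncomputable def traceFreePart (A : Matrix ι ι ℝ) : Matrix ι ι ℝ :=
  A - (A.trace / Fintype.card ι) • 1

lemma trace_traceFreePart [Nonempty ι] (A : Matrix ι ι ℝ) : (traceFreePart A).trace = 0 := by
  simp [traceFreePart, trace_sub, trace_smul, trace_one]

lemma frobeniusDot_traceFreePart_left (A C : Matrix ι ι ℝ) :
    frobeniusDot (traceFreePart A) C =
      frobeniusDot A C - A.trace * C.trace / Fintype.card ι := by
  simp [traceFreePart, frobeniusDot, sub_mul, trace_sub, trace_smul, mul_div_right_comm]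

lemma frobeniusDot_traceFreePart_self [Nonempty ι] (A : Matrix ι ι ℝ) :
    frobeniusDot (traceFreePart A) (traceFreePart A) =
      frobeniusDot A A - A.trace ^ 2 / Fintype.card ι := by
  rw [frobeniusDot_traceFreePart_left, frobeniusDot_comm, frobeniusDot_traceFreePart_left,
    trace_traceFreePart, sq]
  ring

end Frobenius

abbrev Tensor4 (ι : Type*) := ι → ι → ι → ι → ℝ

namespace Tensor4

variable {ι : Type*}

structure IsSkewInPairs (X : Tensor4 ι) : Prop where
  skew_left : ∀ i j k l, X i j k l = -X j i k l
  skew_right : ∀ i j k l, X i j k l = -X i j l k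

lemma IsSkewInPairs.apply_swap_swap {X : Tensor4 ι} (hX : IsSkewInPairs X) (i j k l : ι) :
    X j i l k = X i j k l := by
  rw [hX.skew_left, hX.skew_right, neg_neg]

def kulkarniNomizu (h g : Matrix ι ι ℝ) : Tensor4 ι := fun i j k l =>
  h i k * g j l + h j l * g i k - h i l * g j k - h j k * g i l

lemma isSkewInPairs_kulkarniNomizu (h g : Matrix ι ι ℝ) :
    IsSkewInPairs (kulkarniNomizu h g) :=
  ⟨fun _ _ _ _ => by simp only [kulkarniNomizu]; ring,
    fun _ _ _ _ => by simp only [kulkarniNomizu]; ring⟩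

variable [Fintype ι]

def dot (X Y : Tensor4 ι) : ℝ := ∑ i, ∑ j, ∑ k, ∑ l, X i j k l * Y i j k l

lemma dot_comm (X Y : Tensor4 ι) : dot X Y = dot Y X := by
  simp only [dot, mul_comm]

lemma dot_add_right (X Y Z : Tensor4 ι) : dot X (Y + Z) = dot X Y + dot X Z := by
  simp only [dot, Pi.add_apply, mul_add, sum_add_distrib]

lemma dot_sub_right (X Y Z : Tensor4 ι) : dot X (Y - Z) = dot X Y - dot X Z := by
  simp only [dot, Pi.sub_apply, mul_sub, sum_sub_distrib]

lemma dot_smul_right (X Y : Tensor4 ι) (c : ℝ) : dot X (c • Y) = c * dot X Y := by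
  simp only [dot, Pi.smul_apply, smul_eq_mul, mul_left_comm _ c, ← mul_sum]

lemma dot_self_nonneg (X : Tensor4 ι) : 0 ≤ dot X X := by
  simp only [dot, ← sq]; positivity

lemma sq_dot_le (X Y : Tensor4 ι) : dot X Y ^ 2 ≤ dot X X * dot Y Y := by
  simpa only [dot, ← sq, Fintype.sum_prod_type] using
    sum_mul_sq_le_sq_mul_sq univ (fun p : ι × ι × ι × ι => X p.1 p.2.1 p.2.2.1 p.2.2.2)
      (fun p => Y p.1 p.2.1 p.2.2.1 p.2.2.2)

def ricci (X : Tensor4 ι) : Matrix ι ι ℝ := Matrix.of fun j l => ∑ i, X i j i l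

lemma ricci_add (X Y : Tensor4 ι) : ricci (X + Y) = ricci X + ricci Y := by
  ext j l; simp [ricci, sum_add_distrib]

lemma ricci_sub (X Y : Tensor4 ι) : ricci (X - Y) = ricci X - ricci Y := by
  ext j l; simp [ricci, sum_sub_distrib]

lemma ricci_smul (c : ℝ) (X : Tensor4 ι) : ricci (c • X) = c • ricci X := by
  ext j l; simp [ricci, mul_sum]

lemma sum4_congr {F G : Tensor4 ι} (h : ∀ i j k l, F i j k l = G i j k l) :
    ∑ i, ∑ j, ∑ k, ∑ l, F i j k l = ∑ i, ∑ j, ∑ k, ∑ l, G i j k l := by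
  simp only [h]

lemma sum4_swap_left (F : Tensor4 ι) :
    ∑ i, ∑ j, ∑ k, ∑ l, F i j k l = ∑ i, ∑ j, ∑ k, ∑ l, F j i k l :=
  sum_comm

lemma sum4_swap_right (F : Tensor4 ι) :
    ∑ i, ∑ j, ∑ k, ∑ l, F i j k l = ∑ i, ∑ j, ∑ k, ∑ l, F i j l k :=
  sum_congr rfl fun _ _ => sum_congr rfl fun _ _ => sum_comm

lemma dot_kulkarniNomizu {X : Tensor4 ι} (hX : IsSkewInPairs X) (h g : Matrix ι ι ℝ) :
    dot X (kulkarniNomizu h g) = 4 * ∑ i, ∑ j, ∑ k, ∑ l, X i j k l * h i k * g j l := by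
  have e₂ : ∑ i, ∑ j, ∑ k, ∑ l, X i j k l * (h j l * g i k) =
      ∑ i, ∑ j, ∑ k, ∑ l, X i j k l * h i k * g j l := by
    rw [sum4_swap_left, sum4_swap_right]
    exact sum4_congr fun i j k l => by rw [hX.apply_swap_swap]; ring
  have e₃ : ∑ i, ∑ j, ∑ k, ∑ l, X i j k l * (h i l * g j k) =
      -∑ i, ∑ j, ∑ k, ∑ l, X i j k l * h i k * g j l := by
    rw [sum4_swap_right]
    simp only [← sum_neg_distrib]
    exact sum4_congr fun i j k l => by rw [hX.skew_right i j l k]; ring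
  have e₄ : ∑ i, ∑ j, ∑ k, ∑ l, X i j k l * (h j k * g i l) =
      -∑ i, ∑ j, ∑ k, ∑ l, X i j k l * h i k * g j l := by
    rw [sum4_swap_left]
    simp only [← sum_neg_distrib]
    exact sum4_congr fun i j k l => by rw [hX.skew_left j i k l]; ring
  simp only [dot, kulkarniNomizu, mul_add, mul_sub, sum_add_distrib, sum_sub_distrib]
  rw [e₂, e₃, e₄]
  simp only [mul_assoc]
  ring

lemma dot_kulkarniNomizu_self (B : Matrix ι ι ℝ) :
    dot (kulkarniNomizu B B) (kulkarniNomizu B B) =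
      8 * (frobeniusDot B B ^ 2 - frobeniusDot (B * Bᵀ) (B * Bᵀ)) := by
  have hij : ∀ i j, ∑ k, ∑ l, kulkarniNomizu B B i j k l * B i k * B j l =
      2 * ((∑ k, B i k * B i k) * ∑ l, B j l * B j l) - 2 * ((B * Bᵀ) i j * (B * Bᵀ) i j) := by
    intro i j
    simp only [mul_apply, transpose_apply, sum_mul_sum]
    simp only [mul_sum, ← sum_sub_distrib]
    exact sum_congr rfl fun k _ => sum_congr rfl fun l _ => by simp only [kulkarniNomizu]; ring
  simp only [dot_kulkarniNomizu (isSkewInPairs_kulkarniNomizu B B), hij, frobeniusDot_eq_sum,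
    sum_sub_distrib, ← mul_sum, sum_mul_sum, sq]
  ring

lemma ricci_kulkarniNomizu [DecidableEq ι] (h g : Matrix ι ι ℝ) :
    ricci (kulkarniNomizu h g) = h.trace • g + g.trace • h - g * h - h * g := by
  ext j l
  simp only [ricci, kulkarniNomizu, trace, mul_apply, sum_add_distrib, sum_sub_distrib, ← sum_mul,
    ← mul_sum, of_apply, Matrix.sub_apply, Matrix.add_apply, Matrix.smul_apply, smul_eq_mul,
    diag_apply, mul_comm (h _ l)]

variable [DecidableEq ι]

lemma ricci_kulkarniNomizu_self {B : Matrix ι ι ℝ} (hB : B.trace = 0) :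
    ricci (kulkarniNomizu B B) = -(2 : ℝ) • (B * B) := by
  rw [ricci_kulkarniNomizu, hB, zero_smul, add_zero, sub_eq_add_neg, ← sub_eq_add_neg]
  module

lemma dot_kulkarniNomizu_one {X : Tensor4 ι} (hX : IsSkewInPairs X) (g : Matrix ι ι ℝ) :
    dot X (kulkarniNomizu 1 g) = 4 * frobeniusDot (ricci X) g := by
  have hδ : ∀ i j, ∑ k, ∑ l, X i j k l * (1 : Matrix ι ι ℝ) i k * g j l =
      ∑ l, X i j i l * g j l :=
    fun i j => by simp [one_apply]
  rw [dot_kulkarniNomizu hX, frobeniusDot_eq_sum]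
  simp only [hδ, ricci, of_apply, sum_mul]
  exact congrArg _ (sum_comm.trans (sum_congr rfl fun _ _ => sum_comm))

noncomputable def weylPart (R : Tensor4 ι) : Tensor4 ι :=
  R - ((Fintype.card ι : ℝ) - 2)⁻¹ • kulkarniNomizu 1 (ricci R) +
    ((ricci R).trace / (2 * ((Fintype.card ι : ℝ) - 1) * ((Fintype.card ι : ℝ) - 2))) •
      kulkarniNomizu 1 1

lemma IsSkewInPairs.weylPart {R : Tensor4 ι} (hR : IsSkewInPairs R) :
    IsSkewInPairs (weylPart R) := by
  constructor <;> intro i j k l <;>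
    simp only [Tensor4.weylPart, kulkarniNomizu, Pi.add_apply, Pi.sub_apply, Pi.smul_apply,
      smul_eq_mul]
  · rw [hR.skew_left i j]; ring
  · rw [hR.skew_right i j k]; ring

lemma ricci_weylPart (hn : 2 < Fintype.card ι) (R : Tensor4 ι) : ricci (weylPart R) = 0 := by
  have h₂ := sub_two_pos_of_two_lt hn
  have h₁ : (Fintype.card ι : ℝ) - 1 ≠ 0 := by linarith
  ext j l
  simp only [weylPart, ricci_add, ricci_sub, ricci_smul, ricci_kulkarniNomizu, trace_one, one_mul,
    mul_one, Matrix.add_apply, Matrix.sub_apply, Matrix.smul_apply, smul_eq_mul, Matrix.zero_apply]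
  field_simp
  ring

lemma dot_weylPart_of_ricci_eq_zero {X : Tensor4 ι} (hX : IsSkewInPairs X) (hric : ricci X = 0)
    (R : Tensor4 ι) : dot X (weylPart R) = dot X R := by
  simp only [weylPart, dot_add_right, dot_sub_right, dot_smul_right, dot_kulkarniNomizu_one hX,
    hric, frobeniusDot_zero_left, mul_zero, sub_zero, add_zero]

lemma dot_weylPart_self (hn : 2 < Fintype.card ι) {R : Tensor4 ι} (hR : IsSkewInPairs R) :
    dot (weylPart R) (weylPart R) =
      dot R R - 4 / ((Fintype.card ι : ℝ) - 2) * frobeniusDot (ricci R) (ricci R) +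
        2 * (ricci R).trace ^ 2 / (((Fintype.card ι : ℝ) - 1) * ((Fintype.card ι : ℝ) - 2)) := by
  have h₂ := sub_two_pos_of_two_lt hn
  have h₁ : (Fintype.card ι : ℝ) - 1 ≠ 0 := by linarith
  rw [dot_weylPart_of_ricci_eq_zero hR.weylPart (ricci_weylPart hn R), dot_comm]
  simp only [weylPart, dot_add_right, dot_sub_right, dot_smul_right, dot_kulkarniNomizu_one hR,
    frobeniusDot_one_right]
  field_simp
  ring

lemma dot_weylPart_kulkarniNomizu_add_traceFreePart (hn : 2 < Fintype.card ι)
    {B : Matrix ι ι ℝ} (hBsymm : Bᵀ = B) (hB : B.trace = 0) :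
    dot (weylPart (kulkarniNomizu B B)) (weylPart (kulkarniNomizu B B)) +
        8 * Fintype.card ι / ((Fintype.card ι : ℝ) - 2) *
          frobeniusDot (traceFreePart (B * B)) (traceFreePart (B * B)) =
      8 * ((Fintype.card ι : ℝ) - 2) / ((Fintype.card ι : ℝ) - 1) * frobeniusDot B B ^ 2 := by
  have : Nonempty ι := Fintype.card_pos_iff.mp (by omega)
  have h₂ := sub_two_pos_of_two_lt hn
  have h₁ : (Fintype.card ι : ℝ) - 1 ≠ 0 := by linarith
  have htrace : (B * B).trace = frobeniusDot B B := by
    rw [trace_mul_eq_frobeniusDot, hBsymm]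
  rw [dot_weylPart_self hn (isSkewInPairs_kulkarniNomizu B B), dot_kulkarniNomizu_self,
    ricci_kulkarniNomizu_self hB, frobeniusDot_traceFreePart_self, hBsymm]
  simp only [frobeniusDot_smul_left, frobeniusDot_smul_right, trace_smul, htrace, smul_eq_mul]
  field_simp
  ring

theorem abs_neg_sum_add_trace_pow_three_le (hn : 2 < Fintype.card ι) {W : Tensor4 ι}
    (hW : IsSkewInPairs W) (hWric : ricci W = 0) {B : Matrix ι ι ℝ} (hBsymm : Bᵀ = B)
    (hB : B.trace = 0) :
    |-(∑ i, ∑ j, ∑ k, ∑ l, W i j k l * B i k * B j l) +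
        (Fintype.card ι : ℝ) / ((Fintype.card ι : ℝ) - 2) * (B ^ 3).trace| ≤
      √(((Fintype.card ι : ℝ) - 2) / (2 * ((Fintype.card ι : ℝ) - 1))) *
        √(dot W W + 2 * (Fintype.card ι : ℝ) / ((Fintype.card ι : ℝ) - 2) * frobeniusDot B B) *
        frobeniusDot B B := by
  have hWeyl := dot_weylPart_kulkarniNomizu_add_traceFreePart hn hBsymm hB
  set n : ℝ := (Fintype.card ι : ℝ)
  have h₂ : 0 < n - 2 := sub_two_pos_of_two_lt hn
  set D := weylPart (kulkarniNomizu B B)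
  set r := traceFreePart (B * B)
  have hWD : dot W D = 4 * ∑ i, ∑ j, ∑ k, ∑ l, W i j k l * B i k * B j l := by
    rw [dot_weylPart_of_ricci_eq_zero hW hWric, dot_kulkarniNomizu hW]
  have hBr : frobeniusDot B r = (B ^ 3).trace := by
    rw [frobeniusDot_comm, frobeniusDot_traceFreePart_left, hB, mul_zero, zero_div, sub_zero,
      pow_three, ← mul_assoc, trace_mul_eq_frobeniusDot, hBsymm]
  have hnorm : dot D D / 16 + 2 * n / (n - 2) * (frobeniusDot r r / 4) =
      (n - 2) / (2 * (n - 1)) * frobeniusDot B B ^ 2 := by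
    have h₁ : n - 1 ≠ 0 := by linarith
    field_simp at hWeyl ⊢
    linear_combination 8 * hWeyl
  have hc : 0 ≤ (n - 2) / (2 * (n - 1)) := div_nonneg h₂.le (by linarith)
  calc _ = |-(dot W D / 4) + 2 * n / (n - 2) * (frobeniusDot B r / 2)| := by
        rw [hWD, hBr]; ring_nf
    _ ≤ √((dot W W + 2 * n / (n - 2) * frobeniusDot B B) *
          (dot D D / 16 + 2 * n / (n - 2) * (frobeniusDot r r / 4))) := by
        refine abs_add_mul_le_sqrt (dot_self_nonneg W) (by have := dot_self_nonneg D; positivity)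
          (frobeniusDot_self_nonneg B) (by have := frobeniusDot_self_nonneg r; positivity)
          (by positivity) ?_ ?_
        · nlinarith [sq_dot_le W D]
        · nlinarith [sq_frobeniusDot_le B r]
    _ = _ := by
        rw [hnorm, mul_comm, Real.sqrt_mul (mul_nonneg hc (sq_nonneg _)), Real.sqrt_mul hc,
          Real.sqrt_sq (frobeniusDot_self_nonneg B)]
        ring

end Tensor4

theorem stmt_5_general (n : ℕ) (hn : 3 ≤ n)
    (W : Fin n → Fin n → Fin n → Fin n → ℝ)
    (hanti1 : ∀ i j k l, W i j k l = -W j i k l)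
    (hanti2 : ∀ i j k l, W i j k l = -W i j l k)
    (htrfree : ∀ j l, ∑ i, W i j i l = 0)
    (B : Matrix (Fin n) (Fin n) ℝ) (hB : B.IsSymm) (htrB : B.trace = 0) :
    |-(∑ i, ∑ j, ∑ k, ∑ l, W i j k l * B i k * B j l) +
        (n : ℝ) / ((n : ℝ) - 2) * (B ^ 3).trace| ≤
      Real.sqrt (((n : ℝ) - 2) / (2 * ((n : ℝ) - 1))) *
        Real.sqrt ((∑ i, ∑ j, ∑ k, ∑ l, (W i j k l) ^ 2) +
          2 * (n : ℝ) / ((n : ℝ) - 2) * ∑ i, ∑ j, (B i j) ^ 2) *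
        (∑ i, ∑ j, (B i j) ^ 2) := by
  have hcard : 2 < Fintype.card (Fin n) := by rw [Fintype.card_fin]; omega
  simpa only [Fintype.card_fin, Tensor4.dot, frobeniusDot_eq_sum, sq] using
    Tensor4.abs_neg_sum_add_trace_pow_three_le hcard ⟨hanti1, hanti2⟩ (Matrix.ext htrfree) hB htrB

/-- Lemma 2.5 of the paper:
`|−W_{ijkl} B_{ik} B_{jl} + (n/(n−2)) tr(B³)|
  ≤ √((n−2)/(2(n−1))) (‖W‖² + (2n/(n−2))‖B‖²)^{1/2} ‖B‖²`. -/
theorem stmt_5 (n : ℕ) (hn : 3 ≤ n)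
    (W : Fin n → Fin n → Fin n → Fin n → ℝ)
    (hanti1 : ∀ i j k l, W i j k l = -W j i k l)
    (hanti2 : ∀ i j k l, W i j k l = -W i j l k)
    (hpair : ∀ i j k l, W i j k l = W k l i j)
    (hbianchi : ∀ i j k l, W i j k l + W i k l j + W i l j k = 0)
    (htrfree : ∀ j l, ∑ i, W i j i l = 0)
    (B : Matrix (Fin n) (Fin n) ℝ) (hB : B.IsSymm) (htrB : B.trace = 0) :
    |-(∑ i, ∑ j, ∑ k, ∑ l, W i j k l * B i k * B j l) +
        (n : ℝ) / ((n : ℝ) - 2) * (B ^ 3).trace| ≤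
      Real.sqrt (((n : ℝ) - 2) / (2 * ((n : ℝ) - 1))) *
        Real.sqrt ((∑ i, ∑ j, ∑ k, ∑ l, (W i j k l) ^ 2) +
          2 * (n : ℝ) / ((n : ℝ) - 2) * ∑ i, ∑ j, (B i j) ^ 2) *
        (∑ i, ∑ j, (B i j) ^ 2) :=
  stmt_5_general n hn W hanti1 hanti2 htrfree B hB htrB
end

section
/- Let n ≥ 6 and let W be a 4-tensor on ℝⁿ with curvature symmetries, satisfying the first Bianchi identity, and totally trace-free. Then 2·|Σ_{i,j,k,l,h,m} W_{ijlk} W_{jhkm} W_{himl}| + (1/2)·|Σ_{i,j,k,l,h,m} W_{ijkl} W_{hmij} W_{klhm}| ≤ [2(n²+n−4)/√((n−1)n(n+1)(n+2)) + (n²−n−4)/(2√((n−2)(n−1)n(n+1)))] · ‖W‖³. -/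
/-!
Both sums are traces of cubes of traceless symmetric operators on `ℝⁿ ⊗ ℝⁿ` whose squared
Frobenius norm is `‖W‖²`: `∑ W_{ijkl} W_{hmij} W_{klhm} = tr ℛ³` for the curvature operator
`ℛ_{(i,j),(k,l)} = W_{ijkl}`, and `∑ W_{ijlk} W_{jhkm} W_{himl} = tr W̊³` for
`W̊_{(i,l),(j,k)} = W_{ijlk}`. The rows of `ℛ` are antisymmetric in the pair index, so
`rank ℛ ≤ n(n-1)/2`. The operator `W̊` commutes with the flip of the tensor factors, so it is the
orthogonal sum of its parts on symmetric and on antisymmetric tensors, each of rank at most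
`n(n+1)/2`; total trace-freeness makes all of these traceless.

For a traceless symmetric matrix of rank at most `e`, the eigenvalues `λ` have `∑ λ = 0` and at
most `e` of them are nonzero. With `t = |λ| / √(e(e-1))`, every `λᵢ ≤ (e-1)t`, and below `(e-1)t`
the cubic `x³` lies under the quadratic meeting it doubly at `-t` and simply at `(e-1)t`. Summing
gives `∑ λ³ ≤ (e-2)/√(e(e-1)) · |λ|³`; `e = n(n+1)/2` and `e = n(n-1)/2` give the two constants.
-/

open Finset

section CubeSum

variable {ι : Type*} {s : Finset ι} {x : ι → ℝ} {e : ℝ}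

lemma mul_sq_le_of_sum_eq_zero {i : ι} (hi : i ∈ s) (hsum : ∑ j ∈ s, x j = 0)
    (hcard : (#s : ℝ) ≤ e) : e * x i ^ 2 ≤ (e - 1) * ∑ j ∈ s, x j ^ 2 := by
  classical
  have hrest : ∑ j ∈ s.erase i, x j = -x i := by
    rw [sum_erase_eq_sub hi, hsum, zero_sub]
  have hrest_sq : ∑ j ∈ s.erase i, x j ^ 2 = ∑ j ∈ s, x j ^ 2 - x i ^ 2 :=
    sum_erase_eq_sub hi
  have hrest_card : (#(s.erase i) : ℝ) = #s - 1 := by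
    rw [card_erase_of_mem hi, Nat.cast_pred (card_pos.2 ⟨i, hi⟩)]
  have hcs := sq_sum_le_card_mul_sum_sq (s := s.erase i) (f := x)
  rw [hrest, hrest_sq, hrest_card] at hcs
  have hnonneg : 0 ≤ ∑ j ∈ s, x j ^ 2 - x i ^ 2 :=
    hrest_sq ▸ sum_nonneg fun j _ => sq_nonneg (x j)
  nlinarith [mul_le_mul_of_nonneg_right (sub_le_sub_right hcard 1) hnonneg]

/-- For `e ∈ ℕ`, the maximum of `∑ xᵢ³` over unit vectors `x ∈ ℝᵉ` with `∑ xᵢ = 0`, attained at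
`(e - 1, -1, …, -1) / √(e(e-1))`. -/
noncomputable def cubeSumBound (e : ℝ) : ℝ := (e - 2) / √(e * (e - 1))

lemma sum_pow_three_le_cubeSumBound (hsum : ∑ i ∈ s, x i = 0) (he : 1 < e)
    (hcard : (#s : ℝ) ≤ e) :
    ∑ i ∈ s, x i ^ 3 ≤ cubeSumBound e * √(∑ i ∈ s, x i ^ 2) ^ 3 := by
  set S := ∑ i ∈ s, x i ^ 2
  have hS : 0 ≤ S := sum_nonneg fun i _ => sq_nonneg (x i)
  have hq : 0 < e * (e - 1) := by nlinarith
  set t := √S / √(e * (e - 1))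
  have ht : 0 ≤ t := by positivity
  have ht2 : e * (e - 1) * t ^ 2 = S := by
    rw [div_pow, Real.sq_sqrt hS, Real.sq_sqrt hq.le, mul_div_cancel₀ _ hq.ne']
  have hle : ∀ i ∈ s, x i ≤ (e - 1) * t := fun i hi => by
    have hbound : e * ((e - 1) * t) ^ 2 = (e - 1) * S := by rw [← ht2]; ring
    have hsq : e * x i ^ 2 ≤ e * ((e - 1) * t) ^ 2 :=
      hbound ▸ mul_sq_le_of_sum_eq_zero hi hsum hcard
    exact (abs_le_of_sq_le_sq' (le_of_mul_le_mul_left hsq (by linarith))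
      (by nlinarith)).2
  -- `x ^ 3 - q x = (x + t) ^ 2 * (x - (e - 1) * t)` for the quadratic `q` on the right
  have hcubic : ∀ i ∈ s,
      x i ^ 3 ≤ (e - 3) * t * x i ^ 2 + (2 * e - 3) * t ^ 2 * x i + (e - 1) * t ^ 3 :=
    fun i hi => by nlinarith [mul_nonneg (sq_nonneg (x i + t)) (sub_nonneg.2 (hle i hi))]
  calc ∑ i ∈ s, x i ^ 3
      ≤ ∑ i ∈ s, ((e - 3) * t * x i ^ 2 + (2 * e - 3) * t ^ 2 * x i + (e - 1) * t ^ 3) :=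
        sum_le_sum hcubic
    _ = (e - 3) * t * S + #s * ((e - 1) * t ^ 3) := by
        simp only [sum_add_distrib, ← mul_sum, hsum, sum_const, nsmul_eq_mul]; ring
    _ ≤ (e - 3) * t * S + e * ((e - 1) * t ^ 3) := by gcongr
    _ = (e - 2) * t * S := by linear_combination t * ht2
    _ = cubeSumBound e * √S ^ 3 := by
        rw [cubeSumBound, pow_succ, Real.sq_sqrt hS]; ring

lemma abs_sum_pow_three_le_cubeSumBound (hsum : ∑ i ∈ s, x i = 0) (he : 1 < e)
    (hcard : (#s : ℝ) ≤ e) :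
    |∑ i ∈ s, x i ^ 3| ≤ cubeSumBound e * √(∑ i ∈ s, x i ^ 2) ^ 3 := by
  have hneg := sum_pow_three_le_cubeSumBound (x := -x) (by simp [sum_neg_distrib, hsum]) he hcard
  simp only [Pi.neg_apply, neg_sq, Odd.neg_pow (by decide : Odd 3), sum_neg_distrib] at hneg
  exact abs_le.2 ⟨by linarith, sum_pow_three_le_cubeSumBound hsum he hcard⟩

end CubeSum

theorem Matrix.IsHermitian.trace_pow_eq_sum_eigenvalues_pow {𝕜 ι : Type*} [RCLike 𝕜]
    [Fintype ι] [DecidableEq ι] {A : Matrix ι ι 𝕜} (hA : A.IsHermitian) (k : ℕ) :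
    (A ^ k).trace = ∑ i, (hA.eigenvalues i : 𝕜) ^ k := by
  conv_lhs => rw [hA.spectral_theorem, ← map_pow, Unitary.conjStarAlgAut_apply, trace_mul_cycle,
    Unitary.coe_star_mul_self, one_mul, diagonal_pow, trace_diagonal]
  rfl

theorem Matrix.IsHermitian.abs_trace_pow_three_le_cubeSumBound {ι : Type*} [Fintype ι]
    [DecidableEq ι] {A : Matrix ι ι ℝ} (hA : A.IsHermitian) (htr : A.trace = 0) {e : ℝ} (he : 1 < e)
    (hrank : (A.rank : ℝ) ≤ e) :
    |(A ^ 3).trace| ≤ cubeSumBound e * √((A ^ 2).trace) ^ 3 := by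
  set s := univ.filter fun i => hA.eigenvalues i ≠ 0
  have htrace_pow : ∀ k ≠ 0, (A ^ k).trace = ∑ i ∈ s, hA.eigenvalues i ^ k := fun k hk => by
    rw [hA.trace_pow_eq_sum_eigenvalues_pow, sum_filter_of_ne]
    · rfl
    · intro i _ h hi
      exact h (by simp [hi, hk])
  have hcard : #s = A.rank := by rw [hA.rank_eq_card_non_zero_eigs, Fintype.card_subtype]
  rw [htrace_pow 3 three_ne_zero, htrace_pow 2 two_ne_zero]
  refine abs_sum_pow_three_le_cubeSumBound ?_ he (hcard ▸ hrank)
  have htrace := htrace_pow 1 one_ne_zero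
  rw [pow_one, htr] at htrace
  simpa using htrace.symm

theorem add_pow_of_mul_eq_zero {R : Type*} [Semiring R] {a b : R} (hab : a * b = 0)
    (hba : b * a = 0) : ∀ {k : ℕ}, k ≠ 0 → (a + b) ^ k = a ^ k + b ^ k
  | 1, _ => by simp
  | k + 2, _ => by
    have hab' : a ^ (k + 1) * b = 0 := by rw [pow_succ, mul_assoc, hab, mul_zero]
    have hba' : b ^ (k + 1) * a = 0 := by rw [pow_succ, mul_assoc, hba, mul_zero]
    rw [pow_succ, add_pow_of_mul_eq_zero hab hba k.succ_ne_zero, add_mul, mul_add, mul_add, hab',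
      hba', add_zero, zero_add, ← pow_succ, ← pow_succ]

lemma sqrt_pow_three_add_sqrt_pow_three_le {x y : ℝ} (hx : 0 ≤ x) (hy : 0 ≤ y) :
    √x ^ 3 + √y ^ 3 ≤ √(x + y) ^ 3 := by
  have hcube : ∀ z, 0 ≤ z → √z ^ 3 = z * √z := fun z hz => by rw [pow_succ, Real.sq_sqrt hz]
  rw [hcube x hx, hcube y hy, hcube (x + y) (add_nonneg hx hy), add_mul]
  gcongr <;> linarith

theorem Matrix.abs_trace_pow_three_add_le {ι : Type*} [Fintype ι] [DecidableEq ι]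
    {A B : Matrix ι ι ℝ} (hA : A.IsHermitian) (hB : B.IsHermitian) (htrA : A.trace = 0)
    (htrB : B.trace = 0) (hAB : A * B = 0) (hBA : B * A = 0) {e : ℝ} (he : 2 ≤ e)
    (hrankA : (A.rank : ℝ) ≤ e) (hrankB : (B.rank : ℝ) ≤ e) :
    |((A + B) ^ 3).trace| ≤ cubeSumBound e * √(((A + B) ^ 2).trace) ^ 3 := by
  have hsq_nonneg : ∀ {C : Matrix ι ι ℝ}, C.IsHermitian → 0 ≤ (C ^ 2).trace := fun hC => by
    rw [hC.trace_pow_eq_sum_eigenvalues_pow]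
    exact sum_nonneg fun i _ => sq_nonneg _
  have hκ : 0 ≤ cubeSumBound e := div_nonneg (by linarith) (Real.sqrt_nonneg _)
  rw [add_pow_of_mul_eq_zero hAB hBA three_ne_zero, add_pow_of_mul_eq_zero hAB hBA two_ne_zero,
    trace_add, trace_add]
  calc |(A ^ 3).trace + (B ^ 3).trace|
      ≤ |(A ^ 3).trace| + |(B ^ 3).trace| := abs_add_le _ _
    _ ≤ cubeSumBound e * √((A ^ 2).trace) ^ 3 + cubeSumBound e * √((B ^ 2).trace) ^ 3 :=
        add_le_add (hA.abs_trace_pow_three_le_cubeSumBound htrA (by linarith) hrankA)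
          (hB.abs_trace_pow_three_le_cubeSumBound htrB (by linarith) hrankB)
    _ ≤ cubeSumBound e * √((A ^ 2).trace + (B ^ 2).trace) ^ 3 := by
        rw [← mul_add]
        exact mul_le_mul_of_nonneg_left
          (sqrt_pow_three_add_sqrt_pow_three_le (hsq_nonneg hA) (hsq_nonneg hB)) hκ

theorem Matrix.rank_le_card_of_forall_row_mem_span {m n R : Type*} [Field R] [Fintype m]
    [Fintype n] (A : Matrix m n R) (s : Finset m)
    (h : ∀ i, A.row i ∈ Submodule.span R (A.row '' s)) :
    A.rank ≤ #s := by
  classical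
  have hspan : Submodule.span R (Set.range A.row) ≤ Submodule.span R ↑(s.image A.row) := by
    rw [coe_image, Submodule.span_le]
    exact Set.range_subset_iff.2 h
  rw [rank_eq_finrank_span_row]
  exact (Submodule.finrank_mono hspan).trans
    ((finrank_span_finset_le_card _).trans card_image_le)

section PairRows

variable {ι κ R : Type*} [Fintype ι] [Fintype κ] [Field R]

theorem Matrix.rank_le_card_of_row_swap_eq_smul (A : Matrix (ι × ι) κ R) (c : R)
    (hswap : ∀ p, A.row p.swap = c • A.row p) (Z : Finset (Sym2 ι))
    (hZ : ∀ p, s(p.1, p.2) ∉ Z → A.row p = 0) :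
    A.rank ≤ #Z := by
  classical
  refine (A.rank_le_card_of_forall_row_mem_span (Z.image Quot.out) fun p => ?_).trans
    card_image_le
  by_cases hp : s(p.1, p.2) ∈ Z
  · obtain ⟨q, hqZ, hpq⟩ : ∃ q ∈ Z.image Quot.out, s(q.1, q.2) = s(p.1, p.2) :=
      ⟨_, mem_image_of_mem _ hp, Quot.out_eq _⟩
    have hq : A.row q ∈ Submodule.span R (A.row '' ↑(Z.image Quot.out)) :=
      Submodule.subset_span ⟨q, hqZ, rfl⟩
    rcases Sym2.mk_eq_mk_iff.1 hpq.symm with rfl | rfl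
    · exact hq
    · exact (hswap q).symm ▸ Submodule.smul_mem _ c hq
  · exact hZ p hp ▸ zero_mem _

theorem Matrix.rank_le_choose_succ_two_of_row_swap_eq_smul (A : Matrix (ι × ι) κ R) (c : R)
    (hswap : ∀ p, A.row p.swap = c • A.row p) : A.rank ≤ (Fintype.card ι + 1).choose 2 := by
  simpa [Sym2.card] using A.rank_le_card_of_row_swap_eq_smul c hswap univ (by simp)

theorem Matrix.rank_le_choose_two_of_row_swap_eq_neg [DecidableEq ι] [CharZero R]
    (A : Matrix (ι × ι) κ R) (hswap : ∀ p, A.row p.swap = -A.row p) :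
    A.rank ≤ (Fintype.card ι).choose 2 := by
  rw [← Sym2.card_subtype_not_diag, Fintype.card_subtype]
  refine A.rank_le_card_of_row_swap_eq_smul (-1) (by simpa using hswap) _ fun p hp => ?_
  have hdiag : p.swap = p := by
    simpa [Prod.ext_iff, Sym2.mk_isDiag_iff, eq_comm] using hp
  have := hswap p
  rw [hdiag] at this
  exact self_eq_neg.1 this

end PairRows

lemma add_mul_mul_sub_mul_eq_zero_of_commute {R : Type*} [Ring R] {s a : R} (hs : s * s = 1)
    (h : Commute s a) : (a + s * a) * (a - s * a) = 0 := by
  have h₁ : a * (s * a) = s * a * a := by rw [← mul_assoc, h.eq]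
  have h₂ : s * a * (s * a) = a * a := by
    rw [← mul_assoc, mul_assoc s, ← h.eq, ← mul_assoc, hs, one_mul]
  calc (a + s * a) * (a - s * a) = a * a - a * (s * a) + s * a * a - s * a * (s * a) := by
        noncomm_ring
    _ = 0 := by rw [h₁, h₂]; abel

section Flip

variable (ι : Type*) [DecidableEq ι]

noncomputable def flipMatrix : Matrix (ι × ι) (ι × ι) ℝ := (Equiv.prodComm ι ι).toPEquiv.toMatrix

variable {ι}

lemma isHermitian_flipMatrix : (flipMatrix ι).IsHermitian := by
  ext p q
  simp [flipMatrix, PEquiv.toMatrix_apply]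
  exact if_congr ⟨fun h => by rw [← h, Prod.swap_swap], fun h => by rw [← h, Prod.swap_swap]⟩
    rfl rfl

variable [Fintype ι]

@[simp]
lemma flipMatrix_mul_apply (A : Matrix (ι × ι) (ι × ι) ℝ) (p q : ι × ι) :
    (flipMatrix ι * A) p q = A p.swap q := by
  rw [flipMatrix, PEquiv.toMatrix_toPEquiv_mul]
  rfl

@[simp]
lemma mul_flipMatrix_apply (A : Matrix (ι × ι) (ι × ι) ℝ) (p q : ι × ι) :
    (A * flipMatrix ι) p q = A p q.swap := by
  rw [flipMatrix, PEquiv.mul_toMatrix_toPEquiv]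
  rfl

lemma flipMatrix_mul_self : flipMatrix ι * flipMatrix ι = 1 := by
  ext p q
  rw [flipMatrix_mul_apply]
  simp [flipMatrix, PEquiv.toMatrix_apply, Matrix.one_apply]

theorem Matrix.IsHermitian.abs_trace_pow_three_le_of_commute_flipMatrix
    {A : Matrix (ι × ι) (ι × ι) ℝ} (hA : A.IsHermitian) (hcomm : Commute (flipMatrix ι) A)
    (htr : A.trace = 0) (htr_flip : (flipMatrix ι * A).trace = 0) (hι : 2 ≤ Fintype.card ι) :
    |(A ^ 3).trace| ≤
      cubeSumBound ((Fintype.card ι + 1).choose 2) * √((A ^ 2).trace) ^ 3 := by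
  -- the parts of `A` on symmetric and on antisymmetric tensors
  set P := (1 / 2 : ℝ) • (A + flipMatrix ι * A)
  set Q := (1 / 2 : ℝ) • (A - flipMatrix ι * A)
  have hFA : (flipMatrix ι * A).IsHermitian :=
    (isHermitian_flipMatrix.isSelfAdjoint.commute_iff hA.isSelfAdjoint).1 hcomm
  have hP : P.IsHermitian := (hA.add hFA).smul (IsSelfAdjoint.all _)
  have hQ : Q.IsHermitian := (hA.sub hFA).smul (IsSelfAdjoint.all _)
  have hPQ : P * Q = 0 := by
    rw [smul_mul_smul, add_mul_mul_sub_mul_eq_zero_of_commute flipMatrix_mul_self hcomm,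
      smul_zero]
  have hQP : Q * P = 0 := by
    rw [← hP.eq, ← hQ.eq, ← conjTranspose_mul, hPQ, conjTranspose_zero]
  have hFP : flipMatrix ι * P = P := by
    simp only [P, Matrix.mul_smul, mul_add, ← Matrix.mul_assoc, flipMatrix_mul_self,
      Matrix.one_mul, add_comm]
  have hFQ : flipMatrix ι * Q = -Q := by
    simp only [Q, Matrix.mul_smul, mul_sub, ← Matrix.mul_assoc, flipMatrix_mul_self,
      Matrix.one_mul, ← smul_neg, neg_sub]
  have hrow : ∀ {B : Matrix (ι × ι) (ι × ι) ℝ} {c : ℝ}, flipMatrix ι * B = c • B →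
      (B.rank : ℝ) ≤ ((Fintype.card ι + 1).choose 2 : ℕ) := fun {B c} h => by
    exact_mod_cast B.rank_le_choose_succ_two_of_row_swap_eq_smul c fun p => by
      ext q; simpa using congrFun (congrFun h p) q
  have he : (2 : ℝ) ≤ ((Fintype.card ι + 1).choose 2 : ℕ) := by
    have := Nat.choose_le_choose 2 (Nat.succ_le_succ hι)
    norm_num at this
    exact_mod_cast (show 2 ≤ 3 by norm_num).trans this
  have hsum : A = P + Q := by simp only [P, Q]; module
  have htrP : P.trace = 0 := by simp [P, Matrix.trace_add, htr, htr_flip]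
  have htrQ : Q.trace = 0 := by simp [Q, Matrix.trace_sub, htr, htr_flip]
  rw [hsum]
  exact Matrix.abs_trace_pow_three_add_le hP hQ htrP htrQ hPQ hQP he
    (hrow (c := 1) (by rw [hFP, one_smul])) (hrow (c := -1) (by rw [hFQ, neg_one_smul]))

end Flip

lemma Matrix.trace_pow_three_eq_sum {n R : Type*} [Fintype n] [DecidableEq n] [CommSemiring R]
    (A : Matrix n n R) : (A ^ 3).trace = ∑ p, ∑ q, ∑ r, A p q * A q r * A r p := by
  simp [pow_three, trace, mul_apply, mul_sum, mul_assoc]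

lemma Matrix.IsHermitian.trace_pow_two_eq_sum_sq {n : Type*} [Fintype n] [DecidableEq n]
    {A : Matrix n n ℝ} (hA : A.IsHermitian) : (A ^ 2).trace = ∑ p, ∑ q, A p q ^ 2 := by
  simp only [sq, trace, diag_apply, mul_apply]
  exact sum_congr rfl fun p _ => sum_congr rfl fun q _ => by rw [← hA.apply p q, star_trivial]

section CurvatureOperators

variable {ι : Type*} {W : ι → ι → ι → ι → ℝ}

def curvatureOperator (W : ι → ι → ι → ι → ℝ) : Matrix (ι × ι) (ι × ι) ℝ :=
  Matrix.of fun p q => W p.1 p.2 q.1 q.2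

/-- `W` acting on 2-tensors by `h ↦ (∑ₖₗ W i k j l * h k l)ᵢⱼ`; on symmetric tensors this is the
curvature operator of the second kind. -/
def curvatureOperatorSecondKind (W : ι → ι → ι → ι → ℝ) : Matrix (ι × ι) (ι × ι) ℝ :=
  Matrix.of fun p q => W p.1 q.1 p.2 q.2

lemma isHermitian_curvatureOperator (hpair : ∀ i j k l, W i j k l = W k l i j) :
    (curvatureOperator W).IsHermitian :=
  Matrix.IsHermitian.ext fun _ _ => (hpair _ _ _ _).symm

lemma isHermitian_curvatureOperatorSecondKind (hanti1 : ∀ i j k l, W i j k l = -W j i k l)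
    (hanti2 : ∀ i j k l, W i j k l = -W i j l k) :
    (curvatureOperatorSecondKind W).IsHermitian :=
  Matrix.IsHermitian.ext fun p q => by
    simp only [curvatureOperatorSecondKind, Matrix.of_apply, star_trivial]
    rw [hanti1, hanti2, neg_neg]

variable [Fintype ι]

lemma trace_curvatureOperator (htrfree : ∀ j l, ∑ i, W i j i l = 0) :
    (curvatureOperator W).trace = 0 := by
  simp only [curvatureOperator, Matrix.trace, Matrix.diag_apply, Matrix.of_apply,
    Fintype.sum_prod_type]
  rw [sum_comm]
  exact sum_eq_zero fun j _ => htrfree j j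

lemma trace_curvatureOperatorSecondKind (hanti1 : ∀ i j k l, W i j k l = -W j i k l) :
    (curvatureOperatorSecondKind W).trace = 0 :=
  sum_eq_zero fun p _ => self_eq_neg.1 (hanti1 p.1 p.1 p.2 p.2)

variable [DecidableEq ι]

lemma rank_curvatureOperator_le (hanti1 : ∀ i j k l, W i j k l = -W j i k l) :
    (curvatureOperator W).rank ≤ (Fintype.card ι).choose 2 :=
  Matrix.rank_le_choose_two_of_row_swap_eq_neg _ fun _ => funext fun _ => hanti1 _ _ _ _

lemma commute_flipMatrix_curvatureOperatorSecondKind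
    (hpair : ∀ i j k l, W i j k l = W k l i j) :
    Commute (flipMatrix ι) (curvatureOperatorSecondKind W) := by
  ext p q
  simp only [flipMatrix_mul_apply, mul_flipMatrix_apply, curvatureOperatorSecondKind,
    Matrix.of_apply, Prod.fst_swap, Prod.snd_swap]
  exact hpair _ _ _ _

lemma trace_flipMatrix_mul_curvatureOperatorSecondKind
    (hanti1 : ∀ i j k l, W i j k l = -W j i k l) (htrfree : ∀ j l, ∑ i, W i j i l = 0) :
    (flipMatrix ι * curvatureOperatorSecondKind W).trace = 0 := by
  simp only [Matrix.trace, Matrix.diag_apply, flipMatrix_mul_apply, curvatureOperatorSecondKind,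
    Matrix.of_apply, Fintype.sum_prod_type, Prod.fst_swap, Prod.snd_swap]
  calc ∑ i, ∑ j, W j i i j = ∑ i, ∑ j, -W i j i j :=
        sum_congr rfl fun i _ => sum_congr rfl fun j _ => hanti1 j i i j
    _ = 0 := by
        simp only [sum_neg_distrib]
        rw [sum_comm, neg_eq_zero]
        exact sum_eq_zero fun j _ => htrfree j j

lemma trace_curvatureOperator_sq (hpair : ∀ i j k l, W i j k l = W k l i j) :
    ((curvatureOperator W) ^ 2).trace = ∑ i, ∑ j, ∑ k, ∑ l, W i j k l ^ 2 := by
  rw [(isHermitian_curvatureOperator hpair).trace_pow_two_eq_sum_sq]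
  simp only [curvatureOperator, Matrix.of_apply, Fintype.sum_prod_type]

lemma trace_curvatureOperatorSecondKind_sq (hanti1 : ∀ i j k l, W i j k l = -W j i k l)
    (hanti2 : ∀ i j k l, W i j k l = -W i j l k) :
    ((curvatureOperatorSecondKind W) ^ 2).trace = ∑ i, ∑ j, ∑ k, ∑ l, W i j k l ^ 2 := by
  rw [(isHermitian_curvatureOperatorSecondKind hanti1 hanti2).trace_pow_two_eq_sum_sq]
  simp only [curvatureOperatorSecondKind, Matrix.of_apply, Fintype.sum_prod_type]
  exact sum_congr rfl fun i _ => sum_comm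

lemma trace_curvatureOperator_pow_three :
    ((curvatureOperator W) ^ 3).trace =
      ∑ i, ∑ j, ∑ k, ∑ l, ∑ h, ∑ m, W i j k l * W h m i j * W k l h m := by
  simp only [Matrix.trace_pow_three_eq_sum, curvatureOperator, Matrix.of_apply,
    Fintype.sum_prod_type]
  simp only [mul_right_comm (W _ _ _ _)]

lemma trace_curvatureOperatorSecondKind_pow_three :
    ((curvatureOperatorSecondKind W) ^ 3).trace =
      ∑ i, ∑ j, ∑ k, ∑ l, ∑ h, ∑ m, W i j l k * W j h k m * W h i m l := by
  simp only [Matrix.trace_pow_three_eq_sum, curvatureOperatorSecondKind, Matrix.of_apply,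
    Fintype.sum_prod_type]
  exact sum_congr rfl fun i _ => sum_comm.trans (sum_congr rfl fun j _ => sum_comm)

theorem abs_trace_curvatureOperator_pow_three_le (hanti1 : ∀ i j k l, W i j k l = -W j i k l)
    (hpair : ∀ i j k l, W i j k l = W k l i j) (htrfree : ∀ j l, ∑ i, W i j i l = 0)
    (hι : 3 ≤ Fintype.card ι) :
    |((curvatureOperator W) ^ 3).trace| ≤
      cubeSumBound ((Fintype.card ι).choose 2) * √(∑ i, ∑ j, ∑ k, ∑ l, W i j k l ^ 2) ^ 3 := by
  have he : (1 : ℝ) < (Fintype.card ι).choose 2 := by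
    have := Nat.choose_le_choose 2 hι
    norm_num at this
    exact_mod_cast (show 1 < 3 by norm_num).trans_le this
  rw [← trace_curvatureOperator_sq hpair]
  exact (isHermitian_curvatureOperator hpair).abs_trace_pow_three_le_cubeSumBound
    (trace_curvatureOperator htrfree) he (by exact_mod_cast rank_curvatureOperator_le hanti1)

theorem abs_trace_curvatureOperatorSecondKind_pow_three_le
    (hanti1 : ∀ i j k l, W i j k l = -W j i k l) (hanti2 : ∀ i j k l, W i j k l = -W i j l k)
    (hpair : ∀ i j k l, W i j k l = W k l i j) (htrfree : ∀ j l, ∑ i, W i j i l = 0)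
    (hι : 2 ≤ Fintype.card ι) :
    |((curvatureOperatorSecondKind W) ^ 3).trace| ≤
      cubeSumBound ((Fintype.card ι + 1).choose 2) *
        √(∑ i, ∑ j, ∑ k, ∑ l, W i j k l ^ 2) ^ 3 := by
  rw [← trace_curvatureOperatorSecondKind_sq hanti1 hanti2]
  exact (isHermitian_curvatureOperatorSecondKind hanti1 hanti2)
    |>.abs_trace_pow_three_le_of_commute_flipMatrix
      (commute_flipMatrix_curvatureOperatorSecondKind hpair)
      (trace_curvatureOperatorSecondKind hanti1)
      (trace_flipMatrix_mul_curvatureOperatorSecondKind hanti1 htrfree) hι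

end CurvatureOperators

lemma cubeSumBound_choose_two (m : ℕ) :
    cubeSumBound (m.choose 2) = ((m : ℝ) ^ 2 - m - 4) / √((m - 2) * (m - 1) * m * (m + 1)) := by
  have hsqrt : √(m * (m - 1) / 2 * (m * (m - 1) / 2 - 1) : ℝ) =
      √((m - 2) * (m - 1) * m * (m + 1) : ℝ) / 2 := by
    rw [show (m * (m - 1) / 2 * (m * (m - 1) / 2 - 1) : ℝ) =
        (m - 2) * (m - 1) * m * (m + 1) / 2 ^ 2 by ring,
      Real.sqrt_div' _ (by positivity), Real.sqrt_sq (by norm_num)]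
  rw [cubeSumBound, Nat.cast_choose_two, hsqrt, ← div_div_div_cancel_right₀ two_ne_zero]
  ring_nf

theorem stmt_10_general (n : ℕ) (hn : 6 ≤ n)
    (W : Fin n → Fin n → Fin n → Fin n → ℝ)
    (hanti1 : ∀ i j k l, W i j k l = -W j i k l)
    (hanti2 : ∀ i j k l, W i j k l = -W i j l k)
    (hpair : ∀ i j k l, W i j k l = W k l i j)
    (htrfree : ∀ j l, ∑ i, W i j i l = 0) :
    2 * |∑ i, ∑ j, ∑ k, ∑ l, ∑ h, ∑ m, W i j l k * W j h k m * W h i m l| +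
      (1 / 2) * |∑ i, ∑ j, ∑ k, ∑ l, ∑ h, ∑ m, W i j k l * W h m i j * W k l h m| ≤
      (2 * ((n : ℝ) ^ 2 + n - 4) /
          Real.sqrt (((n : ℝ) - 1) * n * ((n : ℝ) + 1) * ((n : ℝ) + 2)) +
        ((n : ℝ) ^ 2 - n - 4) /
          (2 * Real.sqrt (((n : ℝ) - 2) * ((n : ℝ) - 1) * n * ((n : ℝ) + 1)))) *
        (Real.sqrt (∑ i, ∑ j, ∑ k, ∑ l, (W i j k l) ^ 2)) ^ 3 := by
  have hsecond := abs_trace_curvatureOperatorSecondKind_pow_three_le hanti1 hanti2 hpair htrfree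
    (by rw [Fintype.card_fin]; omega)
  have hfirst := abs_trace_curvatureOperator_pow_three_le hanti1 hpair htrfree
    (by rw [Fintype.card_fin]; omega)
  have hconst : cubeSumBound ((n + 1).choose 2) =
      ((n : ℝ) ^ 2 + n - 4) / √((n - 1) * n * (n + 1) * (n + 2)) := by
    rw [cubeSumBound_choose_two]
    push_cast
    ring_nf
  rw [trace_curvatureOperatorSecondKind_pow_three, Fintype.card_fin, hconst] at hsecond
  rw [trace_curvatureOperator_pow_three, Fintype.card_fin, cubeSumBound_choose_two] at hfirst
  refine (add_le_add (mul_le_mul_of_nonneg_left hsecond zero_le_two)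
    (mul_le_mul_of_nonneg_left hfirst one_half_pos.le)).trans_eq ?_
  ring

/-- Case 3 (`n ≥ 6`) in the proof of Lemma 2.4 of the paper, for a totally
trace-free Weyl-type tensor `W`. -/
theorem stmt_10 (n : ℕ) (hn : 6 ≤ n)
    (W : Fin n → Fin n → Fin n → Fin n → ℝ)
    (hanti1 : ∀ i j k l, W i j k l = -W j i k l)
    (hanti2 : ∀ i j k l, W i j k l = -W i j l k)
    (hpair : ∀ i j k l, W i j k l = W k l i j)
    (hbianchi : ∀ i j k l, W i j k l + W i k l j + W i l j k = 0)
    (htrfree : ∀ j l, ∑ i, W i j i l = 0) :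
    2 * |∑ i, ∑ j, ∑ k, ∑ l, ∑ h, ∑ m, W i j l k * W j h k m * W h i m l| +
      (1 / 2) * |∑ i, ∑ j, ∑ k, ∑ l, ∑ h, ∑ m, W i j k l * W h m i j * W k l h m| ≤
      (2 * ((n : ℝ) ^ 2 + n - 4) /
          Real.sqrt (((n : ℝ) - 1) * n * ((n : ℝ) + 1) * ((n : ℝ) + 2)) +
        ((n : ℝ) ^ 2 - n - 4) /
          (2 * Real.sqrt (((n : ℝ) - 2) * ((n : ℝ) - 1) * n * ((n : ℝ) + 1)))) *
        (Real.sqrt (∑ i, ∑ j, ∑ k, ∑ l, (W i j k l) ^ 2)) ^ 3 :=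
  stmt_10_general n hn W hanti1 hanti2 hpair htrfree
end
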